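/- Convergence criterion for inexact subspace iteration with a rational filter: under the setup of the inexact FEAST error bound, if ε·Δ < (|γ_j| − |γ_{m_0+1}|) · ||w_j|| and ||w_j|| > 0, then ||q̃_j − x_j|| < ||q_j − x_j||, i.e., the eigenvector error strictly decreases after one filtered iteration. -/

import Mathlib

/-!
Each `ω_k (z_k I - A)⁻¹` is diagonal in the orthonormal eigenbasis `x`, so the exact filter
`F = Σ_k ω_k (z_k I - A)⁻¹` maps `x_i` to `γ_i x_i`. Undoing the inexact solves gives
`y_k = ω_k (z_k I - A)⁻¹ (q - r_k)`, hence `γ_j q̃ = γ_j x_j + F w - Σ_k ω_k (z_k I - A)⁻¹ r_k`.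
As `w` has components only along the `x_i` with `i ≥ m₀`, where `|γ_i| ≤ |γ_{m₀}|`, Parseval gives
`‖F w‖ ≤ |γ_{m₀}| ‖w‖`, while the residual term is at most `ε Δ`. Hence
`‖q̃ - x_j‖ ≤ (|γ_{m₀}| ‖w‖ + ε Δ) / |γ_j| < ‖w‖ = ‖q - x_j‖`.
-/

open Matrix

theorem Orthonormal.inner_right_eq_zero_of_mem_span_image {𝕜 E ι : Type*} [RCLike 𝕜]
    [NormedAddCommGroup E] [InnerProductSpace 𝕜 E] {v : ι → E} (hv : Orthonormal 𝕜 v)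
    {s : Set ι} {i : ι} (hi : i ∉ s) {w : E} (hw : w ∈ Submodule.span 𝕜 (v '' s)) :
    inner 𝕜 (v i) w = 0 := by
  obtain ⟨l, hl, rfl⟩ := (Finsupp.mem_span_image_iff_linearCombination 𝕜).1 hw
  exact inner_eq_zero_symm.1 (hv.inner_finsupp_eq_zero hi hl)

section DiagonalOperator

variable {𝕜 E ι F : Type*} [RCLike 𝕜] [NormedAddCommGroup E] [InnerProductSpace 𝕜 E] [Fintype ι]
  [FunLike F E E] [LinearMapClass F 𝕜 E E] (b : OrthonormalBasis ι 𝕜 E) {T : F} {μ : ι → 𝕜}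

theorem OrthonormalBasis.inner_apply_of_apply_eq_smul (hT : ∀ i, T (b i) = μ i • b i)
    (v : E) (i : ι) : inner 𝕜 (b i) (T v) = μ i * inner 𝕜 (b i) v := by
  conv_lhs => rw [← b.sum_repr' v]
  simp only [map_sum, map_smul, hT, smul_smul, inner_sum, inner_smul_right]
  rw [Finset.sum_eq_single i (fun k _ hk => by rw [b.inner_eq_zero hk.symm, mul_zero]) (by simp),
    b.inner_eq_one, mul_one, mul_comm]

theorem OrthonormalBasis.injective_of_apply_eq_smul (hT : ∀ i, T (b i) = μ i • b i)
    (hμ : ∀ i, μ i ≠ 0) : Function.Injective T := by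
  refine (injective_iff_map_eq_zero T).2 fun v hv => b.repr.injective ?_
  ext i
  have := b.inner_apply_of_apply_eq_smul hT v i
  rw [hv, inner_zero_right, eq_comm, mul_eq_zero] at this
  simpa [b.repr_apply_apply] using this.resolve_left (hμ i)

theorem OrthonormalBasis.norm_apply_le_of_apply_eq_smul (hT : ∀ i, T (b i) = μ i • b i)
    {v : E} {C : ℝ} (hC : 0 ≤ C) (hμ : ∀ i, inner 𝕜 (b i) v ≠ 0 → ‖μ i‖ ≤ C) :
    ‖T v‖ ≤ C * ‖v‖ := by
  refine (pow_le_pow_iff_left₀ (norm_nonneg _) (by positivity) two_ne_zero).1 ?_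
  rw [← b.sum_sq_norm_inner_right, mul_pow, ← b.sum_sq_norm_inner_right, Finset.mul_sum]
  refine Finset.sum_le_sum fun i _ => ?_
  rw [b.inner_apply_of_apply_eq_smul hT, norm_mul, mul_pow]
  by_cases h : inner 𝕜 (b i) v = 0
  · simp [h]
  · gcongr
    exact hμ i h

end DiagonalOperator

theorem norm_sum_apply_le_of_norm_le {𝕜 E F ι : Type*} [NontriviallyNormedField 𝕜]
    [SeminormedAddCommGroup E] [SeminormedAddCommGroup F] [NormedSpace 𝕜 E] [NormedSpace 𝕜 F]
    (s : Finset ι) (G : ι → E →L[𝕜] F) (r : ι → E) {ε : ℝ}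
    (hr : ∀ k ∈ s, ‖r k‖ ≤ ε) : ‖∑ k ∈ s, G k (r k)‖ ≤ ε * ∑ k ∈ s, ‖G k‖ := by
  rw [Finset.mul_sum]
  refine (norm_sum_le _ _).trans (Finset.sum_le_sum fun k hk => ?_)
  rw [mul_comm]
  exact (G k).le_opNorm_of_le (hr k hk)

theorem norm_inv_smul_sub_lt {𝕜 E : Type*} [NormedField 𝕜] [SeminormedAddCommGroup E]
    [NormedSpace 𝕜 E] {γ : 𝕜} (hγ : γ ≠ 0) (x w u e : E) {g δ : ℝ} (hu : ‖u‖ ≤ g * ‖w‖)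
    (he : ‖e‖ ≤ δ) (hδ : δ < (‖γ‖ - g) * ‖w‖) : ‖γ⁻¹ • (γ • x + u - e) - x‖ < ‖w‖ := by
  have hγpos : 0 < ‖γ‖ := norm_pos_iff.2 hγ
  rw [smul_sub, smul_add, inv_smul_smul₀ hγ, add_sub_assoc, add_sub_cancel_left, ← smul_sub,
    norm_smul, norm_inv, inv_mul_lt_iff₀ hγpos]
  calc ‖u - e‖ ≤ ‖u‖ + ‖e‖ := norm_sub_le u e
    _ ≤ g * ‖w‖ + δ := add_le_add hu he
    _ < ‖γ‖ * ‖w‖ := by linarith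

namespace Matrix

variable {𝕜 n : Type*} [RCLike 𝕜] [Fintype n] [DecidableEq n]

theorem toEuclideanLin_smul_one_sub_apply {A : Matrix n n 𝕜} {v : EuclideanSpace 𝕜 n} {μ : 𝕜}
    (hv : toEuclideanLin A v = μ • v) (c : 𝕜) :
    toEuclideanLin (c • 1 - A) v = (c - μ) • v := by
  rw [map_sub, map_smul, toLpLin_one, LinearMap.sub_apply, LinearMap.smul_apply, hv, sub_smul,
    LinearMap.id_apply]

theorem isUnit_of_injective_toEuclideanLin {M : Matrix n n 𝕜}
    (hM : Function.Injective (toEuclideanLin M)) : IsUnit M :=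
  mulVec_injective_iff_isUnit.1 fun u v huv => by
    simpa using hM (a₁ := WithLp.toLp 2 u) (a₂ := WithLp.toLp 2 v) (by simp [toLpLin_apply, huv])

theorem toEuclideanCLM_smul_inv_apply_smul_inv {M : Matrix n n 𝕜} (hM : IsUnit M) {ω : 𝕜}
    (hω : ω ≠ 0) (v : EuclideanSpace 𝕜 n) :
    toEuclideanCLM (𝕜 := 𝕜) (ω • M⁻¹) (ω⁻¹ • toEuclideanLin M v) = v := by
  have hinv : toEuclideanLin M⁻¹ (toEuclideanLin M v) = v := by
    rw [← LinearMap.comp_apply, ← toLpLin_mul_same,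
      nonsing_inv_mul _ ((isUnit_iff_isUnit_det M).1 hM), toLpLin_one, LinearMap.id_apply]
  rw [ContinuousLinearMap.map_smul, map_smul, _root_.smul_apply, smul_smul,
    inv_mul_cancel₀ hω, one_smul, ← ContinuousLinearMap.coe_coe,
    coe_toEuclideanCLM_eq_toEuclideanLin, hinv]

theorem toEuclideanCLM_smul_inv_apply_of_apply_eq_smul {M : Matrix n n 𝕜} (hM : IsUnit M)
    {ω c : 𝕜} (hω : ω ≠ 0) (hc : c ≠ 0) {v : EuclideanSpace 𝕜 n}
    (hv : toEuclideanLin M v = c • v) :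
    toEuclideanCLM (𝕜 := 𝕜) (ω • M⁻¹) v = (ω * c⁻¹) • v := by
  have := toEuclideanCLM_smul_inv_apply_smul_inv hM hω ((ω * c⁻¹) • v)
  rwa [map_smul (toEuclideanLin M), hv, smul_smul, smul_smul,
    show ω⁻¹ * (ω * c⁻¹) * c = 1 by field_simp, one_smul] at this

end Matrix

theorem stmt7_general {n nc : ℕ} (A : Matrix (Fin n) (Fin n) ℂ)
    (x : Fin n → EuclideanSpace ℂ (Fin n)) (lam : Fin n → ℝ)
    (hortho : Orthonormal ℂ x)
    (heig : ∀ i, Matrix.toEuclideanLin A (x i) = (lam i : ℂ) • x i)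
    (z : Fin nc → ℂ) (ω : Fin nc → ℂ)
    (hz : ∀ k i, z k ≠ (lam i : ℂ)) (hω : ∀ k, ω k ≠ 0)
    (γ : Fin n → ℂ) (hγ : ∀ i, γ i = ∑ k, ω k * (z k - (lam i : ℂ))⁻¹)
    (hord : ∀ i i' : Fin n, i ≤ i' → ‖γ i'‖ ≤ ‖γ i‖)
    (m0 : ℕ) (hm0 : m0 < n) (j : Fin n) (hγj : γ j ≠ 0)
    (w q : EuclideanSpace ℂ (Fin n))
    (hw : w ∈ Submodule.span ℂ {v | ∃ i : Fin n, m0 ≤ (i : ℕ) ∧ v = x i})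
    (hq : q = x j + w)
    (y : Fin nc → EuclideanSpace ℂ (Fin n)) (r : Fin nc → EuclideanSpace ℂ (Fin n))
    (ε : ℝ)
    (hr : ∀ k, r k = q - (ω k)⁻¹ •
      Matrix.toEuclideanLin (z k • (1 : Matrix (Fin n) (Fin n) ℂ) - A) (y k))
    (hrε : ∀ k, ‖r k‖ ≤ ε)
    (qt : EuclideanSpace ℂ (Fin n)) (hqt : qt = (γ j)⁻¹ • ∑ k, y k)
    (Δ : ℝ)
    (hΔ : Δ = ∑ k, ‖Matrix.toEuclideanCLM (𝕜 := ℂ)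
      (ω k • (z k • (1 : Matrix (Fin n) (Fin n) ℂ) - A)⁻¹)‖)
    (hεΔ : ε * Δ < (‖γ j‖ - ‖γ ⟨m0, hm0⟩‖) * ‖w‖) :
    ‖qt - x j‖ < ‖q - x j‖ := by
  let b : OrthonormalBasis (Fin n) ℂ _ :=
    .mk hortho (hortho.linearIndependent.span_eq_top_of_card_eq_finrank' (by simp)).ge
  have hb : ⇑b = x := OrthonormalBasis.coe_mk _ _
  have hBx k i : toEuclideanLin (z k • 1 - A) (x i) = (z k - lam i) • x i :=
    toEuclideanLin_smul_one_sub_apply (heig i) (z k)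
  have hB k : IsUnit (z k • 1 - A) := isUnit_of_injective_toEuclideanLin <|
    b.injective_of_apply_eq_smul (by simpa only [hb] using hBx k) fun i => sub_ne_zero.2 (hz k i)
  let G k := toEuclideanCLM (𝕜 := ℂ) (ω k • (z k • 1 - A)⁻¹)
  have hFx i : (∑ k, G k) (x i) = γ i • x i := by
    simp only [_root_.sum_apply, hγ, Finset.sum_smul, G,
      toEuclideanCLM_smul_inv_apply_of_apply_eq_smul (hB _) (hω _) (sub_ne_zero.2 (hz _ i))
        (hBx _ i)]
  have hy k : y k = G k (q - r k) := by
    rw [hr k, sub_sub_cancel]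
    exact (toEuclideanCLM_smul_inv_apply_smul_inv (hB k) (hω k) (y k)).symm
  have hqt_eq : qt = (γ j)⁻¹ • (γ j • x j + (∑ k, G k) w - ∑ k, G k (r k)) := by
    rw [hqt, ← hFx j, ← map_add, ← hq, _root_.sum_apply, ← Finset.sum_sub_distrib]
    simp only [hy, map_sub]
  have hcoeff i (hi : inner ℂ (x i) w ≠ 0) : m0 ≤ (i : ℕ) := by
    have hset : {v | ∃ i : Fin n, m0 ≤ (i : ℕ) ∧ v = x i} = x '' {i | m0 ≤ (i : ℕ)} := by
      ext v
      simp [eq_comm]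
    rw [hset] at hw
    by_contra h
    exact hi (hortho.inner_right_eq_zero_of_mem_span_image h hw)
  have hFw : ‖(∑ k, G k) w‖ ≤ ‖γ ⟨m0, hm0⟩‖ * ‖w‖ :=
    b.norm_apply_le_of_apply_eq_smul (by simpa only [hb] using hFx) (norm_nonneg _)
      fun i hi => hord _ _ (hcoeff i (by simpa only [hb] using hi))
  have hRe : ‖∑ k, G k (r k)‖ ≤ ε * Δ :=
    hΔ ▸ norm_sum_apply_le_of_norm_le _ G r fun k _ => hrε k
  rw [hqt_eq, hq, add_sub_cancel_left]
  exact norm_inv_smul_sub_lt hγj _ _ _ _ hFw hRe hεΔ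

/-- Convergence criterion for inexact subspace iteration with a rational filter:
under the inexact FEAST setup, if `ε·Δ < (|γ_j| − |γ_{m0+1}|)·‖w‖` and `‖w‖ > 0`, then
`‖q̃ − x j‖ < ‖q − x j‖`: the eigenvector error strictly decreases.  Setup: `A` Hermitian with orthonormal eigenvectors `x i`,
eigenvalues `lam i`; filter eigenvalues `γ i = Σ_k ω_k (z_k − λ_i)⁻¹` ordered by decreasing
magnitude; `j < m0 < n` (0-indexed), `γ_j ≠ 0`; `q = x j + w` with `w` in the span of the
trailing eigenvectors; approximate solves `y k` of `(1/ω_k)(z_k I − A) y_k = q` have residuals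
`r k = q − (1/ω_k)(z_k I − A) y_k` with `‖r k‖ ≤ ε`.  Then `q̃ = (1/γ_j) Σ_k y_k` satisfies
`‖q̃ − x j‖ ≤ (|γ_{m0+1}| ‖w‖ + ε Δ)/|γ_j|` with `Δ = Σ_k ‖ω_k (z_k I − A)⁻¹‖` (op. 2-norm). -/
theorem stmt7 {n nc : ℕ} (A : Matrix (Fin n) (Fin n) ℂ) (hA : A.IsHermitian)
    (x : Fin n → EuclideanSpace ℂ (Fin n)) (lam : Fin n → ℝ)
    (hortho : Orthonormal ℂ x)
    (heig : ∀ i, Matrix.toEuclideanLin A (x i) = (lam i : ℂ) • x i)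
    (z : Fin nc → ℂ) (ω : Fin nc → ℂ)
    (hz : ∀ k i, z k ≠ (lam i : ℂ)) (hω : ∀ k, ω k ≠ 0)
    (γ : Fin n → ℂ) (hγ : ∀ i, γ i = ∑ k, ω k * (z k - (lam i : ℂ))⁻¹)
    (hord : ∀ i i' : Fin n, i ≤ i' → ‖γ i'‖ ≤ ‖γ i‖)
    (m0 : ℕ) (hm0 : m0 < n) (j : Fin n) (hj : (j : ℕ) < m0) (hγj : γ j ≠ 0)
    (w q : EuclideanSpace ℂ (Fin n))
    (hw : w ∈ Submodule.span ℂ {v | ∃ i : Fin n, m0 ≤ (i : ℕ) ∧ v = x i})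
    (hq : q = x j + w)
    (y : Fin nc → EuclideanSpace ℂ (Fin n)) (r : Fin nc → EuclideanSpace ℂ (Fin n))
    (ε : ℝ)
    (hr : ∀ k, r k = q - (ω k)⁻¹ •
      Matrix.toEuclideanLin (z k • (1 : Matrix (Fin n) (Fin n) ℂ) - A) (y k))
    (hrε : ∀ k, ‖r k‖ ≤ ε)
    (qt : EuclideanSpace ℂ (Fin n)) (hqt : qt = (γ j)⁻¹ • ∑ k, y k)
    (Δ : ℝ)
    (hΔ : Δ = ∑ k, ‖Matrix.toEuclideanCLM (𝕜 := ℂ)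
      (ω k • (z k • (1 : Matrix (Fin n) (Fin n) ℂ) - A)⁻¹)‖)
    (hεΔ : ε * Δ < (‖γ j‖ - ‖γ ⟨m0, hm0⟩‖) * ‖w‖)
    (hwpos : 0 < ‖w‖) :
    ‖qt - x j‖ < ‖q - x j‖ :=
  stmt7_general A x lam hortho heig z ω hz hω γ hγ hord m0 hm0 j hγj w q hw hq y r ε hr hrε qt hqt Δ
    hΔ hεΔ
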